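/- With b_λ = p⊗p⊗p + λ(p⊗q⊗q + q⊗p⊗q + q⊗q⊗p), p,q orthonormal: if λ ≤ 1/2, then v* = p⊗p⊗p is the unique best rank-one approximation of b_λ; if λ > 1/2, there are exactly two best rank-one approximations, neither equal to p⊗p⊗p, corresponding to α = ±√((2λ−1)/λ). -/

import Mathlib

/-!
For a rank-one tensor `c • u₁ ⊗ u₂ ⊗ u₃`, optimising over the scale `c` gives
`‖b_λ - c • u₁ ⊗ u₂ ⊗ u₃‖² ≥ ‖b_λ‖² - ⟪b_λ, u₁ ⊗ u₂ ⊗ u₃⟫² / ∏ ‖uᵢ‖²`. The inner product only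
sees the coordinates `xᵢ = (⟪p, uᵢ⟫, ⟪q, uᵢ⟫)`, in which it is a symmetric trilinear form on `ℝ²`,
so by Bessel's inequality optimal `uᵢ` lie in `span {p, q}`. Writing the form as
`⟪x₁, S(x₂, x₃)⟫` and using Cauchy–Schwarz, everything reduces to an explicit sum-of-squares
bound `|S(y, z)|² ≤ μ² |y|² |z|²`, with `μ² = 1` for `λ ≤ 1/2` and `μ² = 4λ³/(3λ - 1)` for
`λ > 1/2`. The equality cases of these identities force `x₁, x₂, x₃` onto one line of slope `β`,
where `β = 0`, resp. `λβ² = 2λ - 1`.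
-/

open scoped BigOperators

/-- Elementary (rank-one) order-3 tensor `u ⊗ v ⊗ w` on `ℝⁿ ⊗ ℝⁿ ⊗ ℝⁿ`. -/
noncomputable def t3 {n : ℕ} (u v w : EuclideanSpace ℝ (Fin n)) :
    EuclideanSpace ℝ (Fin n × Fin n × Fin n) :=
  WithLp.toLp 2 (fun i : Fin n × Fin n × Fin n => u i.1 * v i.2.1 * w i.2.2)

/-- The tensor `b_λ = p⊗p⊗p + λ(p⊗q⊗q + q⊗p⊗q + q⊗q⊗p)`. -/
noncomputable def bLam {n : ℕ} (p q : EuclideanSpace ℝ (Fin n)) (lam : ℝ) :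
    EuclideanSpace ℝ (Fin n × Fin n × Fin n) :=
  t3 p p p + lam • (t3 p q q + t3 q p q + t3 q q p)

/-- The set of rank-one order-3 tensors. -/
def rankOneSet (n : ℕ) : Set (EuclideanSpace ℝ (Fin n × Fin n × Fin n)) :=
  {v | ∃ (c : ℝ) (u₁ u₂ u₃ : EuclideanSpace ℝ (Fin n)), v = c • t3 u₁ u₂ u₃}

/-- The set of best rank-one approximations of `b`. -/
def bestSet {n : ℕ} (b : EuclideanSpace ℝ (Fin n × Fin n × Fin n)) :
    Set (EuclideanSpace ℝ (Fin n × Fin n × Fin n)) :=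
  {v | v ∈ rankOneSet n ∧ ∀ w ∈ rankOneSet n, ‖b - v‖ ≤ ‖b - w‖}

open scoped RealInnerProductSpace

section Tensor

variable {n : ℕ}

theorem inner_t3 (u₁ u₂ u₃ w₁ w₂ w₃ : EuclideanSpace ℝ (Fin n)) :
    ⟪t3 u₁ u₂ u₃, t3 w₁ w₂ w₃⟫ = ⟪u₁, w₁⟫ * ⟪u₂, w₂⟫ * ⟪u₃, w₃⟫ := by
  simp only [t3, PiLp.inner_apply, RCLike.inner_apply, conj_trivial, Fintype.sum_prod_type]
  rw [Finset.sum_mul_sum, Finset.sum_mul]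
  simp_rw [Finset.sum_mul, Finset.mul_sum]
  refine Finset.sum_congr rfl fun i _ => Finset.sum_congr rfl fun j _ =>
    Finset.sum_congr rfl fun k _ => ?_
  ring

theorem norm_t3_sq (u₁ u₂ u₃ : EuclideanSpace ℝ (Fin n)) :
    ‖t3 u₁ u₂ u₃‖ ^ 2 = ‖u₁‖ ^ 2 * ‖u₂‖ ^ 2 * ‖u₃‖ ^ 2 := by
  simp only [← real_inner_self_eq_norm_sq, inner_t3]

theorem t3_smul (a₁ a₂ a₃ : ℝ) (u₁ u₂ u₃ : EuclideanSpace ℝ (Fin n)) :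
    t3 (a₁ • u₁) (a₂ • u₂) (a₃ • u₃) = (a₁ * a₂ * a₃) • t3 u₁ u₂ u₃ := by
  ext i
  simp only [t3, PiLp.smul_apply, smul_eq_mul]
  ring

end Tensor

section OrthonormalPair

variable {E : Type*} [NormedAddCommGroup E] [InnerProductSpace ℝ E] {p q : E}

def coords (p q u : E) : ℝ × ℝ := (⟪p, u⟫, ⟪q, u⟫)

theorem norm_sub_coords_sq (hp : ‖p‖ = 1) (hq : ‖q‖ = 1) (hpq : ⟪p, q⟫ = 0) (u : E) :
    ‖u - ((coords p q u).1 • p + (coords p q u).2 • q)‖ ^ 2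
      = ‖u‖ ^ 2 - ((coords p q u).1 ^ 2 + (coords p q u).2 ^ 2) := by
  have hpp : ⟪p, p⟫ = 1 := by rw [real_inner_self_eq_norm_sq, hp, one_pow]
  have hqq : ⟪q, q⟫ = 1 := by rw [real_inner_self_eq_norm_sq, hq, one_pow]
  have hqp : ⟪q, p⟫ = 0 := by rw [real_inner_comm]; exact hpq
  simp only [coords, ← real_inner_self_eq_norm_sq, inner_sub_left, inner_sub_right,
    inner_add_left, inner_add_right, real_inner_smul_left, real_inner_smul_right, hpp, hqq, hpq,
    hqp, real_inner_comm u p, real_inner_comm u q]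
  ring

theorem coords_sq_le (hp : ‖p‖ = 1) (hq : ‖q‖ = 1) (hpq : ⟪p, q⟫ = 0) (u : E) :
    (coords p q u).1 ^ 2 + (coords p q u).2 ^ 2 ≤ ‖u‖ ^ 2 := by
  have := norm_sub_coords_sq hp hq hpq u
  nlinarith [sq_nonneg ‖u - ((coords p q u).1 • p + (coords p q u).2 • q)‖]

theorem eq_of_coords_sq_eq (hp : ‖p‖ = 1) (hq : ‖q‖ = 1) (hpq : ⟪p, q⟫ = 0) {u : E}
    (h : (coords p q u).1 ^ 2 + (coords p q u).2 ^ 2 = ‖u‖ ^ 2) :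
    u = (coords p q u).1 • p + (coords p q u).2 • q := by
  have := norm_sub_coords_sq hp hq hpq u
  rw [h, sub_self, sq_eq_zero_iff, norm_eq_zero, sub_eq_zero] at this
  exact this

theorem coords_add_smul (hp : ‖p‖ = 1) (hq : ‖q‖ = 1) (hpq : ⟪p, q⟫ = 0) (β : ℝ) :
    coords p q (p + β • q) = (1, β) := by
  have hqp : ⟪q, p⟫ = 0 := by rw [real_inner_comm]; exact hpq
  simp only [coords, inner_add_right, real_inner_smul_right, real_inner_self_eq_norm_sq, hp, hq,
    hpq, hqp]
  norm_num

theorem norm_add_smul_sq (hp : ‖p‖ = 1) (hq : ‖q‖ = 1) (hpq : ⟪p, q⟫ = 0) (β : ℝ) :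
    ‖p + β • q‖ ^ 2 = 1 + β ^ 2 := by
  rw [norm_add_sq_real, real_inner_smul_right, hpq, norm_smul, mul_pow, hp, hq,
    Real.norm_eq_abs, sq_abs]
  ring

end OrthonormalPair

theorem norm_sub_smul_sq {E : Type*} [NormedAddCommGroup E] [InnerProductSpace ℝ E]
    (b v : E) (c : ℝ) : ‖b - c • v‖ ^ 2 = ‖b‖ ^ 2 - 2 * c * ⟪b, v⟫ + c ^ 2 * ‖v‖ ^ 2 := by
  rw [norm_sub_sq_real, real_inner_smul_right, norm_smul, mul_pow, Real.norm_eq_abs, sq_abs]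
  ring

-- `m (m - 2cF + c²N) = (m - cF)² + c² (mN - F²)`
theorem two_mul_sub_sq_mul_le {m F N : ℝ} (hm : 0 < m) (hF : F ^ 2 ≤ m * N) (c : ℝ) :
    2 * c * F - c ^ 2 * N ≤ m := by
  nlinarith [sq_nonneg (m - c * F), mul_nonneg (sq_nonneg c) (sub_nonneg.2 hF)]

theorem eq_of_two_mul_sub_sq_mul_eq {m F N c : ℝ} (hm : 0 < m) (hF : F ^ 2 ≤ m * N)
    (h : 2 * c * F - c ^ 2 * N = m) : c * F = m ∧ F ^ 2 = m * N := by
  have hsum : (m - c * F) ^ 2 + c ^ 2 * (m * N - F ^ 2) = 0 := by linear_combination -m * h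
  have h₁ := mul_nonneg (sq_nonneg c) (sub_nonneg.2 hF)
  have hcF : c * F = m := by nlinarith [sq_nonneg (m - c * F)]
  refine ⟨hcF, ?_⟩
  have hc : c ≠ 0 := by rintro rfl; linarith [hcF]
  have : c ^ 2 * (m * N - F ^ 2) = 0 := by nlinarith [sq_nonneg (m - c * F)]
  linarith [(mul_eq_zero.mp this).resolve_left (pow_ne_zero 2 hc)]

theorem pos_and_pos_and_pos_of_mul_mul_pos {a b c : ℝ} (ha : 0 ≤ a) (hb : 0 ≤ b) (hc : 0 ≤ c)
    (h : 0 < a * b * c) : 0 < a ∧ 0 < b ∧ 0 < c := by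
  refine ⟨ha.lt_of_ne ?_, hb.lt_of_ne ?_, hc.lt_of_ne ?_⟩ <;> rintro rfl <;> simp at h

theorem eq_of_mul_mul_eq {a₁ a₂ a₃ b₁ b₂ b₃ : ℝ} (h₁ : 0 ≤ a₁) (h₂ : 0 ≤ a₂) (h₃ : 0 ≤ a₃)
    (l₁ : a₁ ≤ b₁) (l₂ : a₂ ≤ b₂) (l₃ : a₃ ≤ b₃) (hpos : 0 < b₁ * b₂ * b₃)
    (h : a₁ * a₂ * a₃ = b₁ * b₂ * b₃) : a₁ = b₁ ∧ a₂ = b₂ ∧ a₃ = b₃ := by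
  obtain ⟨p₁, p₂, p₃⟩ := pos_and_pos_and_pos_of_mul_mul_pos h₁ h₂ h₃ (h ▸ hpos)
  refine ⟨?_, ?_, ?_⟩ <;> by_contra hne
  · nlinarith [mul_lt_mul_of_pos_right (lt_of_le_of_ne l₁ hne) (mul_pos p₂ p₃),
      mul_le_mul l₂ l₃ p₃.le (p₂.le.trans l₂), (p₁.le.trans l₁)]
  · nlinarith [mul_lt_mul_of_pos_right (lt_of_le_of_ne l₂ hne) (mul_pos p₁ p₃),
      mul_le_mul l₁ l₃ p₃.le (p₁.le.trans l₁), (p₂.le.trans l₂)]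
  · nlinarith [mul_lt_mul_of_pos_right (lt_of_le_of_ne l₃ hne) (mul_pos p₁ p₂),
      mul_le_mul l₁ l₂ p₂.le (p₁.le.trans l₁), (p₃.le.trans l₃)]

section Plane

def bLamForm (lam : ℝ) (x y z : ℝ × ℝ) : ℝ :=
  x.1 * y.1 * z.1 + lam * (x.1 * y.2 * z.2 + x.2 * y.1 * z.2 + x.2 * y.2 * z.1)

def bLamSlice (lam : ℝ) (y z : ℝ × ℝ) : ℝ × ℝ :=
  (y.1 * z.1 + lam * (y.2 * z.2), lam * (y.1 * z.2 + y.2 * z.1))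

variable {lam m : ℝ}

theorem bLamForm_eq_slice (lam : ℝ) (x y z : ℝ × ℝ) :
    bLamForm lam x y z = x.1 * (bLamSlice lam y z).1 + x.2 * (bLamSlice lam y z).2 := by
  simp only [bLamForm, bLamSlice]
  ring

theorem sq_bLamForm_le_of_slice
    (hslice : ∀ y z : ℝ × ℝ, (bLamSlice lam y z).1 ^ 2 + (bLamSlice lam y z).2 ^ 2
      ≤ m * ((y.1 ^ 2 + y.2 ^ 2) * (z.1 ^ 2 + z.2 ^ 2)))
    (x y z : ℝ × ℝ) :
    bLamForm lam x y z ^ 2 ≤ m * ((x.1 ^ 2 + x.2 ^ 2) * (y.1 ^ 2 + y.2 ^ 2) * (z.1 ^ 2 + z.2 ^ 2)) := by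
  set S := bLamSlice lam y z
  have cauchy_schwarz : bLamForm lam x y z ^ 2 ≤ (x.1 ^ 2 + x.2 ^ 2) * (S.1 ^ 2 + S.2 ^ 2) := by
    rw [bLamForm_eq_slice]
    nlinarith [sq_nonneg (x.1 * S.2 - x.2 * S.1)]
  calc bLamForm lam x y z ^ 2 ≤ (x.1 ^ 2 + x.2 ^ 2) * (S.1 ^ 2 + S.2 ^ 2) := cauchy_schwarz
    _ ≤ (x.1 ^ 2 + x.2 ^ 2) * (m * ((y.1 ^ 2 + y.2 ^ 2) * (z.1 ^ 2 + z.2 ^ 2))) :=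
        mul_le_mul_of_nonneg_left (hslice y z) (by positivity)
    _ = m * ((x.1 ^ 2 + x.2 ^ 2) * (y.1 ^ 2 + y.2 ^ 2) * (z.1 ^ 2 + z.2 ^ 2)) := by ring

theorem slice_eq_of_sq_bLamForm_eq
    (hslice : ∀ y z : ℝ × ℝ, (bLamSlice lam y z).1 ^ 2 + (bLamSlice lam y z).2 ^ 2
      ≤ m * ((y.1 ^ 2 + y.2 ^ 2) * (z.1 ^ 2 + z.2 ^ 2)))
    {x y z : ℝ × ℝ} (hx : 0 < x.1 ^ 2 + x.2 ^ 2)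
    (heq : bLamForm lam x y z ^ 2
      = m * ((x.1 ^ 2 + x.2 ^ 2) * (y.1 ^ 2 + y.2 ^ 2) * (z.1 ^ 2 + z.2 ^ 2))) :
    (bLamSlice lam y z).1 ^ 2 + (bLamSlice lam y z).2 ^ 2
        = m * ((y.1 ^ 2 + y.2 ^ 2) * (z.1 ^ 2 + z.2 ^ 2)) ∧
      x.1 * (bLamSlice lam y z).2 = x.2 * (bLamSlice lam y z).1 := by
  set S := bLamSlice lam y z
  have lagrange : (x.1 ^ 2 + x.2 ^ 2) * (S.1 ^ 2 + S.2 ^ 2) - bLamForm lam x y z ^ 2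
      = (x.1 * S.2 - x.2 * S.1) ^ 2 := by
    rw [bLamForm_eq_slice]; ring
  have hS := mul_le_mul_of_nonneg_left (hslice y z) hx.le
  have hgap : (x.1 * S.2 - x.2 * S.1) ^ 2 = 0 := le_antisymm (by linarith) (sq_nonneg _)
  constructor
  · exact mul_left_cancel₀ hx.ne' (by linarith)
  · linarith [pow_eq_zero_iff two_ne_zero |>.mp hgap]

theorem sq_mul_sq_sub_slice_sq (lam a b c d : ℝ) :
    (a ^ 2 + b ^ 2) * (c ^ 2 + d ^ 2)
        - ((bLamSlice lam (a, b) (c, d)).1 ^ 2 + (bLamSlice lam (a, b) (c, d)).2 ^ 2)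
      = (1 - lam ^ 2) * (b * d) ^ 2 + (1 + lam) / 2 * (a * d - b * c) ^ 2
        + (1 + lam) * (1 - 2 * lam) / 2 * (a * d + b * c) ^ 2 := by
  simp only [bLamSlice]
  ring

theorem four_mul_sq_mul_sq_sub_slice_sq (lam a b c d : ℝ) :
    4 * lam ^ 3 * ((a ^ 2 + b ^ 2) * (c ^ 2 + d ^ 2))
        - (3 * lam - 1) * ((bLamSlice lam (a, b) (c, d)).1 ^ 2 + (bLamSlice lam (a, b) (c, d)).2 ^ 2)
      = (1 + lam) * (lam * (b * d) - (2 * lam - 1) * (a * c)) ^ 2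
        + (1 + lam) * lam ^ 2 * (a * d - b * c) ^ 2 := by
  simp only [bLamSlice]
  ring

theorem slice_sq_le_of_le_half (hlam : 0 ≤ lam) (hle : lam ≤ 1 / 2) (y z : ℝ × ℝ) :
    (bLamSlice lam y z).1 ^ 2 + (bLamSlice lam y z).2 ^ 2
      ≤ (y.1 ^ 2 + y.2 ^ 2) * (z.1 ^ 2 + z.2 ^ 2) := by
  obtain ⟨a, b⟩ := y
  obtain ⟨c, d⟩ := z
  rw [← sub_nonneg, sq_mul_sq_sub_slice_sq]
  have : 0 ≤ 1 - lam ^ 2 := by nlinarith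
  have : 0 ≤ (1 + lam) * (1 - 2 * lam) / 2 := by nlinarith
  have : 0 ≤ (1 + lam) / 2 := by linarith
  positivity

theorem snd_eq_zero_of_slice_sq_eq (hlam : 0 ≤ lam) (hle : lam ≤ 1 / 2) {y z : ℝ × ℝ}
    (hy : 0 < y.1 ^ 2 + y.2 ^ 2) (hz : 0 < z.1 ^ 2 + z.2 ^ 2)
    (heq : (bLamSlice lam y z).1 ^ 2 + (bLamSlice lam y z).2 ^ 2
      = (y.1 ^ 2 + y.2 ^ 2) * (z.1 ^ 2 + z.2 ^ 2)) :
    y.2 = 0 ∧ z.2 = 0 := by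
  obtain ⟨a, b⟩ := y
  obtain ⟨c, d⟩ := z
  have sos := sq_mul_sq_sub_slice_sq lam a b c d
  rw [heq, sub_self] at sos
  dsimp only at hy hz ⊢
  have h₁ : 0 < 1 - lam ^ 2 := by nlinarith
  have h₂ : 0 < (1 + lam) / 2 := by linarith
  have h₃ : 0 ≤ (1 + lam) * (1 - 2 * lam) / 2 := by nlinarith
  have t₁ := mul_nonneg h₁.le (sq_nonneg (b * d))
  have t₂ := mul_nonneg h₂.le (sq_nonneg (a * d - b * c))
  have t₃ := mul_nonneg h₃ (sq_nonneg (a * d + b * c))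
  have hbd : b * d = 0 := by
    simpa [h₁.ne'] using (by linarith : (1 - lam ^ 2) * (b * d) ^ 2 = 0)
  have had : a * d = b * c := by
    have := (by linarith : (1 + lam) / 2 * (a * d - b * c) ^ 2 = 0)
    simpa [h₂.ne', sub_eq_zero] using this
  rcases mul_eq_zero.mp hbd with rfl | rfl
  · have ha : a ≠ 0 := by rintro rfl; simp at hy
    exact ⟨rfl, (mul_eq_zero.mp (by linarith : a * d = 0)).resolve_left ha⟩
  · have hc : c ≠ 0 := by rintro rfl; simp at hz
    exact ⟨(mul_eq_zero.mp (by linarith : b * c = 0)).resolve_right hc, rfl⟩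

theorem slice_sq_le_of_half_lt (hl : 1 / 2 < lam) (y z : ℝ × ℝ) :
    (bLamSlice lam y z).1 ^ 2 + (bLamSlice lam y z).2 ^ 2
      ≤ 4 * lam ^ 3 / (3 * lam - 1) * ((y.1 ^ 2 + y.2 ^ 2) * (z.1 ^ 2 + z.2 ^ 2)) := by
  obtain ⟨a, b⟩ := y
  obtain ⟨c, d⟩ := z
  have sos := four_mul_sq_mul_sq_sub_slice_sq lam a b c d
  have : 0 ≤ 1 + lam := by linarith
  have : 0 ≤ (1 + lam) * (lam * (b * d) - (2 * lam - 1) * (a * c)) ^ 2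
      + (1 + lam) * lam ^ 2 * (a * d - b * c) ^ 2 := by positivity
  rw [div_mul_eq_mul_div, le_div_iff₀ (by linarith)]
  dsimp only at sos ⊢
  linarith

theorem exists_snd_eq_mul_fst_of_slice_sq_eq (hl : 1 / 2 < lam) {y z : ℝ × ℝ}
    (hy : 0 < y.1 ^ 2 + y.2 ^ 2) (hz : 0 < z.1 ^ 2 + z.2 ^ 2)
    (heq : (bLamSlice lam y z).1 ^ 2 + (bLamSlice lam y z).2 ^ 2
      = 4 * lam ^ 3 / (3 * lam - 1) * ((y.1 ^ 2 + y.2 ^ 2) * (z.1 ^ 2 + z.2 ^ 2))) :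
    ∃ β : ℝ, lam * β ^ 2 = 2 * lam - 1 ∧ y.2 = β * y.1 ∧ z.2 = β * z.1 := by
  obtain ⟨a, b⟩ := y
  obtain ⟨c, d⟩ := z
  have hl0 : 0 < lam := by linarith
  have sos := four_mul_sq_mul_sq_sub_slice_sq lam a b c d
  rw [heq, div_mul_eq_mul_div, mul_div_cancel₀ _ (by linarith), sub_self] at sos
  dsimp only at hy hz ⊢
  have h₁ : 0 < 1 + lam := by linarith
  have h₂ : 0 < (1 + lam) * lam ^ 2 := by positivity
  have t₁ := mul_nonneg h₁.le (sq_nonneg (lam * (b * d) - (2 * lam - 1) * (a * c)))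
  have t₂ := mul_nonneg h₂.le (sq_nonneg (a * d - b * c))
  have hbd : lam * (b * d) = (2 * lam - 1) * (a * c) := by
    have := (by linarith :
      (1 + lam) * (lam * (b * d) - (2 * lam - 1) * (a * c)) ^ 2 = 0)
    simpa [h₁.ne', sub_eq_zero] using this
  have had : a * d = b * c := by
    have := (by linarith : (1 + lam) * lam ^ 2 * (a * d - b * c) ^ 2 = 0)
    simpa [h₂.ne', sub_eq_zero] using this
  have ha : a ≠ 0 := by
    rintro rfl
    have hb : b ≠ 0 := by rintro rfl; simp at hy
    have hc : c = 0 := (mul_eq_zero.mp (by linarith : b * c = 0)).resolve_left hb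
    have hd : d = 0 := by simpa [hc, hb, hl0.ne'] using hbd
    simp [hc, hd] at hz
  have hc : c ≠ 0 := by
    rintro rfl
    have hd : d ≠ 0 := by rintro rfl; simp at hz
    exact ha ((mul_eq_zero.mp (by linarith : a * d = 0)).resolve_right hd)
  refine ⟨b / a, ?_, by field_simp, by field_simp; linarith⟩
  have hb : (lam * b ^ 2 - (2 * lam - 1) * a ^ 2) * c = 0 := by
    linear_combination a * hbd - lam * b * had
  have := (mul_eq_zero.mp hb).resolve_right hc
  field_simp
  linarith

theorem snd_eq_zero_of_sq_bLamForm_eq (hlam : 0 ≤ lam) (hle : lam ≤ 1 / 2) {x y z : ℝ × ℝ}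
    (h0 : bLamForm lam x y z ≠ 0)
    (heq : bLamForm lam x y z ^ 2
      = (x.1 ^ 2 + x.2 ^ 2) * (y.1 ^ 2 + y.2 ^ 2) * (z.1 ^ 2 + z.2 ^ 2)) :
    x.2 = 0 ∧ y.2 = 0 ∧ z.2 = 0 := by
  have hprod : 0 < (x.1 ^ 2 + x.2 ^ 2) * (y.1 ^ 2 + y.2 ^ 2) * (z.1 ^ 2 + z.2 ^ 2) := by
    rw [← heq]; positivity
  obtain ⟨hx, hy, hz⟩ := pos_and_pos_and_pos_of_mul_mul_pos (by positivity) (by positivity)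
    (by positivity) hprod
  obtain ⟨hS, hlag⟩ := slice_eq_of_sq_bLamForm_eq (m := 1)
    (fun y z ↦ by rw [one_mul]; exact slice_sq_le_of_le_half hlam hle y z) hx
    (by rw [heq, one_mul])
  obtain ⟨hy₂, hz₂⟩ := snd_eq_zero_of_slice_sq_eq hlam hle hy hz (by rw [hS, one_mul])
  have hyz : y.1 * z.1 ≠ 0 := by
    rw [hy₂] at hy; rw [hz₂] at hz
    exact mul_ne_zero (by rintro h; simp [h] at hy) (by rintro h; simp [h] at hz)
  simp only [bLamSlice, hy₂, hz₂] at hlag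
  refine ⟨?_, hy₂, hz₂⟩
  exact (mul_eq_zero.mp (by linear_combination -hlag : x.2 * (y.1 * z.1) = 0)).resolve_right hyz

theorem exists_snd_eq_mul_fst_of_sq_bLamForm_eq (hl : 1 / 2 < lam) {x y z : ℝ × ℝ}
    (h0 : bLamForm lam x y z ≠ 0)
    (heq : bLamForm lam x y z ^ 2 = 4 * lam ^ 3 / (3 * lam - 1)
      * ((x.1 ^ 2 + x.2 ^ 2) * (y.1 ^ 2 + y.2 ^ 2) * (z.1 ^ 2 + z.2 ^ 2))) :
    ∃ β : ℝ, lam * β ^ 2 = 2 * lam - 1 ∧ x.2 = β * x.1 ∧ y.2 = β * y.1 ∧ z.2 = β * z.1 := by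
  have hm : 0 < 4 * lam ^ 3 / (3 * lam - 1) := by
    have : 0 < 3 * lam - 1 := by linarith
    positivity
  have hprod : 0 < (x.1 ^ 2 + x.2 ^ 2) * (y.1 ^ 2 + y.2 ^ 2) * (z.1 ^ 2 + z.2 ^ 2) :=
    pos_of_mul_pos_right (by rw [← heq]; positivity) hm.le
  obtain ⟨hx, hy, hz⟩ := pos_and_pos_and_pos_of_mul_mul_pos (by positivity) (by positivity)
    (by positivity) hprod
  obtain ⟨hS, hlag⟩ := slice_eq_of_sq_bLamForm_eq (slice_sq_le_of_half_lt hl) hx heq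
  obtain ⟨β, hβ, hy₂, hz₂⟩ := exists_snd_eq_mul_fst_of_slice_sq_eq hl hy hz hS
  have hyz : 2 * lam * (y.1 * z.1) ≠ 0 := by
    rw [hy₂] at hy; rw [hz₂] at hz
    refine mul_ne_zero (by linarith) (mul_ne_zero ?_ ?_) <;> rintro h <;> simp [h] at hy hz
  simp only [bLamSlice, hy₂, hz₂] at hlag
  refine ⟨β, hβ, ?_, hy₂, hz₂⟩
  have : (2 * lam * (y.1 * z.1)) * (x.2 - β * x.1) = 0 := by
    linear_combination -hlag - x.2 * y.1 * z.1 * hβ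
  exact sub_eq_zero.mp ((mul_eq_zero.mp this).resolve_left hyz)

theorem bLamForm_of_snd_eq_mul_fst {β : ℝ} {x y z : ℝ × ℝ} (hx : x.2 = β * x.1)
    (hy : y.2 = β * y.1) (hz : z.2 = β * z.1) :
    bLamForm lam x y z = x.1 * y.1 * z.1 * (1 + 3 * lam * β ^ 2) := by
  simp only [bLamForm, hx, hy, hz]
  ring

end Plane

theorem bestSet_eq_of_attains {n : ℕ} {b : EuclideanSpace ℝ (Fin n × Fin n × Fin n)} {L : ℝ}
    (hlb : ∀ w ∈ rankOneSet n, L ≤ ‖b - w‖ ^ 2) {v₀ : EuclideanSpace ℝ (Fin n × Fin n × Fin n)}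
    (hv₀ : v₀ ∈ rankOneSet n) (hL : ‖b - v₀‖ ^ 2 = L) :
    bestSet b = {v | v ∈ rankOneSet n ∧ ‖b - v‖ ^ 2 = L} := by
  ext v
  refine ⟨fun ⟨hv, hmin⟩ ↦ ⟨hv, le_antisymm ?_ (hlb v hv)⟩, fun ⟨hv, hvL⟩ ↦ ⟨hv, fun w hw ↦ ?_⟩⟩
  · exact hL ▸ pow_le_pow_left₀ (norm_nonneg _) (hmin v₀ hv₀) 2
  · exact (pow_le_pow_iff_left₀ (norm_nonneg _) (norm_nonneg _) two_ne_zero).mp (hvL ▸ hlb w hw)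

section BestApproximation

variable {n : ℕ} {p q : EuclideanSpace ℝ (Fin n)} {lam m : ℝ}

theorem inner_bLam_t3 (p q : EuclideanSpace ℝ (Fin n)) (lam : ℝ)
    (u₁ u₂ u₃ : EuclideanSpace ℝ (Fin n)) :
    ⟪bLam p q lam, t3 u₁ u₂ u₃⟫
      = bLamForm lam (coords p q u₁) (coords p q u₂) (coords p q u₃) := by
  simp only [bLam, inner_add_left, real_inner_smul_left, inner_t3, bLamForm, coords]

theorem sq_inner_bLam_t3_le (hp : ‖p‖ = 1) (hq : ‖q‖ = 1) (hpq : ⟪p, q⟫ = 0) (hm : 0 ≤ m)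
    (hbound : ∀ x y z : ℝ × ℝ, bLamForm lam x y z ^ 2
      ≤ m * ((x.1 ^ 2 + x.2 ^ 2) * (y.1 ^ 2 + y.2 ^ 2) * (z.1 ^ 2 + z.2 ^ 2)))
    (u₁ u₂ u₃ : EuclideanSpace ℝ (Fin n)) :
    ⟪bLam p q lam, t3 u₁ u₂ u₃⟫ ^ 2 ≤ m * (‖u₁‖ ^ 2 * ‖u₂‖ ^ 2 * ‖u₃‖ ^ 2) := by
  rw [inner_bLam_t3]
  refine (hbound _ _ _).trans (mul_le_mul_of_nonneg_left ?_ hm)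
  gcongr <;> exact coords_sq_le hp hq hpq _

theorem sq_norm_bLam_sub_ge (hp : ‖p‖ = 1) (hq : ‖q‖ = 1) (hpq : ⟪p, q⟫ = 0) (hm : 0 < m)
    (hbound : ∀ x y z : ℝ × ℝ, bLamForm lam x y z ^ 2
      ≤ m * ((x.1 ^ 2 + x.2 ^ 2) * (y.1 ^ 2 + y.2 ^ 2) * (z.1 ^ 2 + z.2 ^ 2)))
    {w : EuclideanSpace ℝ (Fin n × Fin n × Fin n)} (hw : w ∈ rankOneSet n) :
    ‖bLam p q lam‖ ^ 2 - m ≤ ‖bLam p q lam - w‖ ^ 2 := by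
  obtain ⟨c, u₁, u₂, u₃, rfl⟩ := hw
  rw [norm_sub_smul_sq, norm_t3_sq]
  linarith [two_mul_sub_sq_mul_le hm (sq_inner_bLam_t3_le hp hq hpq hm.le hbound u₁ u₂ u₃) c]

theorem eq_coords_of_sq_norm_bLam_sub_eq (hp : ‖p‖ = 1) (hq : ‖q‖ = 1) (hpq : ⟪p, q⟫ = 0)
    (hm : 0 < m)
    (hbound : ∀ x y z : ℝ × ℝ, bLamForm lam x y z ^ 2
      ≤ m * ((x.1 ^ 2 + x.2 ^ 2) * (y.1 ^ 2 + y.2 ^ 2) * (z.1 ^ 2 + z.2 ^ 2)))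
    {c : ℝ} {u₁ u₂ u₃ : EuclideanSpace ℝ (Fin n)}
    (heq : ‖bLam p q lam - c • t3 u₁ u₂ u₃‖ ^ 2 = ‖bLam p q lam‖ ^ 2 - m) :
    ∃ x₁ x₂ x₃ : ℝ × ℝ,
      u₁ = x₁.1 • p + x₁.2 • q ∧ u₂ = x₂.1 • p + x₂.2 • q ∧ u₃ = x₃.1 • p + x₃.2 • q ∧
      c * bLamForm lam x₁ x₂ x₃ = m ∧
      bLamForm lam x₁ x₂ x₃ ^ 2
        = m * ((x₁.1 ^ 2 + x₁.2 ^ 2) * (x₂.1 ^ 2 + x₂.2 ^ 2) * (x₃.1 ^ 2 + x₃.2 ^ 2)) := by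
  set x₁ := coords p q u₁
  set x₂ := coords p q u₂
  set x₃ := coords p q u₃
  rw [norm_sub_smul_sq, norm_t3_sq] at heq
  obtain ⟨hcF, hFN⟩ := eq_of_two_mul_sub_sq_mul_eq hm
    (sq_inner_bLam_t3_le hp hq hpq hm.le hbound u₁ u₂ u₃) (c := c) (by linarith)
  rw [inner_bLam_t3] at hcF hFN
  have hF : bLamForm lam x₁ x₂ x₃ ≠ 0 := by rintro h; rw [h, mul_zero] at hcF; exact hm.ne hcF
  have hN : 0 < ‖u₁‖ ^ 2 * ‖u₂‖ ^ 2 * ‖u₃‖ ^ 2 :=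
    pos_of_mul_pos_right (hFN ▸ by positivity) hm.le
  -- the bound on `bLamForm` and Bessel's inequality are both tight
  have hcoords : (x₁.1 ^ 2 + x₁.2 ^ 2) * (x₂.1 ^ 2 + x₂.2 ^ 2) * (x₃.1 ^ 2 + x₃.2 ^ 2)
      = ‖u₁‖ ^ 2 * ‖u₂‖ ^ 2 * ‖u₃‖ ^ 2 := by
    refine le_antisymm (by gcongr <;> exact coords_sq_le hp hq hpq _) ?_
    exact le_of_mul_le_mul_left (hFN ▸ hbound x₁ x₂ x₃) hm
  obtain ⟨e₁, e₂, e₃⟩ := eq_of_mul_mul_eq (by positivity) (by positivity) (by positivity)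
    (coords_sq_le hp hq hpq u₁) (coords_sq_le hp hq hpq u₂) (coords_sq_le hp hq hpq u₃) hN hcoords
  exact ⟨x₁, x₂, x₃, eq_of_coords_sq_eq hp hq hpq e₁, eq_of_coords_sq_eq hp hq hpq e₂,
    eq_of_coords_sq_eq hp hq hpq e₃, hcF, hcoords ▸ hFN⟩

theorem t3_of_snd_eq_mul_fst (p q : EuclideanSpace ℝ (Fin n)) {β : ℝ} {x y z : ℝ × ℝ}
    (hx : x.2 = β * x.1) (hy : y.2 = β * y.1) (hz : z.2 = β * z.1) :
    t3 (x.1 • p + x.2 • q) (y.1 • p + y.2 • q) (z.1 • p + z.2 • q)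
      = (x.1 * y.1 * z.1) • t3 (p + β • q) (p + β • q) (p + β • q) := by
  rw [← t3_smul]
  simp only [hx, hy, hz, smul_add, smul_smul, mul_comm]

theorem exists_eq_smul_t3_add_smul_of_sq_norm_bLam_sub_eq (hp : ‖p‖ = 1) (hq : ‖q‖ = 1)
    (hpq : ⟪p, q⟫ = 0) (hm : 0 < m)
    (hbound : ∀ x y z : ℝ × ℝ, bLamForm lam x y z ^ 2
      ≤ m * ((x.1 ^ 2 + x.2 ^ 2) * (y.1 ^ 2 + y.2 ^ 2) * (z.1 ^ 2 + z.2 ^ 2)))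
    {P : ℝ → Prop}
    (hline : ∀ x y z : ℝ × ℝ, bLamForm lam x y z ≠ 0 → bLamForm lam x y z ^ 2
      = m * ((x.1 ^ 2 + x.2 ^ 2) * (y.1 ^ 2 + y.2 ^ 2) * (z.1 ^ 2 + z.2 ^ 2)) →
      ∃ β, P β ∧ x.2 = β * x.1 ∧ y.2 = β * y.1 ∧ z.2 = β * z.1)
    {c : ℝ} {u₁ u₂ u₃ : EuclideanSpace ℝ (Fin n)}
    (heq : ‖bLam p q lam - c • t3 u₁ u₂ u₃‖ ^ 2 = ‖bLam p q lam‖ ^ 2 - m) :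
    ∃ β a : ℝ, P β ∧ a * (1 + 3 * lam * β ^ 2) = m ∧
      c • t3 u₁ u₂ u₃ = a • t3 (p + β • q) (p + β • q) (p + β • q) := by
  obtain ⟨x₁, x₂, x₃, rfl, rfl, rfl, hcF, hFN⟩ :=
    eq_coords_of_sq_norm_bLam_sub_eq hp hq hpq hm hbound heq
  have hF : bLamForm lam x₁ x₂ x₃ ≠ 0 := fun h ↦ hm.ne' (by rw [← hcF, h, mul_zero])
  obtain ⟨β, hβ, h₁, h₂, h₃⟩ := hline x₁ x₂ x₃ hF hFN
  refine ⟨β, c * (x₁.1 * x₂.1 * x₃.1), hβ, ?_, ?_⟩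
  · rw [← hcF, bLamForm_of_snd_eq_mul_fst h₁ h₂ h₃]
    ring
  · rw [t3_of_snd_eq_mul_fst p q h₁ h₂ h₃, smul_smul]

theorem sq_norm_bLam_sub_smul_t3_add_smul (hp : ‖p‖ = 1) (hq : ‖q‖ = 1) (hpq : ⟪p, q⟫ = 0)
    (c β : ℝ) :
    ‖bLam p q lam - c • t3 (p + β • q) (p + β • q) (p + β • q)‖ ^ 2
      = ‖bLam p q lam‖ ^ 2 - 2 * c * (1 + 3 * lam * β ^ 2) + c ^ 2 * (1 + β ^ 2) ^ 3 := by
  rw [norm_sub_smul_sq, norm_t3_sq, inner_bLam_t3, coords_add_smul hp hq hpq,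
    norm_add_smul_sq hp hq hpq]
  simp only [bLamForm]
  ring

theorem sq_norm_bLam_sub_t3_self (hp : ‖p‖ = 1) (hq : ‖q‖ = 1) (hpq : ⟪p, q⟫ = 0) :
    ‖bLam p q lam - t3 p p p‖ ^ 2 = ‖bLam p q lam‖ ^ 2 - 1 := by
  have h := sq_norm_bLam_sub_smul_t3_add_smul (lam := lam) hp hq hpq 1 0
  rw [zero_smul, add_zero, one_smul] at h
  rw [h]
  ring

-- `c = F / N` is the optimal scale at `β`, where `F = 6λ - 2` and `N = ((3λ - 1) / λ)³`.
theorem sq_norm_bLam_sub_smul_t3_of_sq_eq (hp : ‖p‖ = 1) (hq : ‖q‖ = 1) (hpq : ⟪p, q⟫ = 0)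
    (hl : 1 / 2 < lam) {β : ℝ} (hβ : lam * β ^ 2 = 2 * lam - 1) :
    ‖bLam p q lam - (2 * lam ^ 3 / (3 * lam - 1) ^ 2) • t3 (p + β • q) (p + β • q) (p + β • q)‖ ^ 2
      = ‖bLam p q lam‖ ^ 2 - 4 * lam ^ 3 / (3 * lam - 1) := by
  have hl0 : lam ≠ 0 := by linarith
  have h3 : 3 * lam - 1 ≠ 0 := by linarith
  have hF : 1 + 3 * lam * β ^ 2 = 2 * (3 * lam - 1) := by linear_combination 3 * hβ
  have hN : 1 + β ^ 2 = (3 * lam - 1) / lam := by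
    rw [eq_div_iff hl0]
    linear_combination hβ
  have key : 2 * (2 * lam ^ 3 / (3 * lam - 1) ^ 2) * (2 * (3 * lam - 1))
      - (2 * lam ^ 3 / (3 * lam - 1) ^ 2) ^ 2 * ((3 * lam - 1) / lam) ^ 3
      = 4 * lam ^ 3 / (3 * lam - 1) := by
    field_simp
    ring
  rw [sq_norm_bLam_sub_smul_t3_add_smul hp hq hpq, hF, hN]
  linarith

theorem bestSet_bLam_of_le_half (hp : ‖p‖ = 1) (hq : ‖q‖ = 1) (hpq : ⟪p, q⟫ = 0)
    (hlam : 0 ≤ lam) (hle : lam ≤ 1 / 2) :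
    bestSet (bLam p q lam) = {t3 p p p} := by
  have hbound : ∀ x y z : ℝ × ℝ, bLamForm lam x y z ^ 2
      ≤ 1 * ((x.1 ^ 2 + x.2 ^ 2) * (y.1 ^ 2 + y.2 ^ 2) * (z.1 ^ 2 + z.2 ^ 2)) :=
    sq_bLamForm_le_of_slice fun y z ↦ by rw [one_mul]; exact slice_sq_le_of_le_half hlam hle y z
  have hline (x y z : ℝ × ℝ) (h0 : bLamForm lam x y z ≠ 0) (heq : bLamForm lam x y z ^ 2
      = 1 * ((x.1 ^ 2 + x.2 ^ 2) * (y.1 ^ 2 + y.2 ^ 2) * (z.1 ^ 2 + z.2 ^ 2))) :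
      ∃ β : ℝ, β = 0 ∧ x.2 = β * x.1 ∧ y.2 = β * y.1 ∧ z.2 = β * z.1 := by
    obtain ⟨h₁, h₂, h₃⟩ := snd_eq_zero_of_sq_bLamForm_eq hlam hle h0 (by rw [heq, one_mul])
    exact ⟨0, rfl, by simp [h₁, h₂, h₃]⟩
  have hppp : t3 p p p ∈ rankOneSet n := ⟨1, p, p, p, (one_smul ℝ _).symm⟩
  rw [bestSet_eq_of_attains (fun w hw ↦ sq_norm_bLam_sub_ge hp hq hpq one_pos hbound hw) hppp
    (sq_norm_bLam_sub_t3_self hp hq hpq)]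
  ext v
  refine ⟨?_, fun hv ↦ hv ▸ ⟨hppp, sq_norm_bLam_sub_t3_self hp hq hpq⟩⟩
  rintro ⟨⟨c, u₁, u₂, u₃, rfl⟩, heq⟩
  obtain ⟨β, a, rfl, ha, hv⟩ :=
    exists_eq_smul_t3_add_smul_of_sq_norm_bLam_sub_eq hp hq hpq one_pos hbound hline heq
  rw [hv, zero_smul, add_zero, (by simpa using ha : a = 1), one_smul]
  rfl

theorem bestSet_bLam_of_half_lt (hp : ‖p‖ = 1) (hq : ‖q‖ = 1) (hpq : ⟪p, q⟫ = 0)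
    (hl : 1 / 2 < lam) {α : ℝ} (hα : lam * α ^ 2 = 2 * lam - 1) :
    bestSet (bLam p q lam)
      = {(2 * lam ^ 3 / (3 * lam - 1) ^ 2) • t3 (p + α • q) (p + α • q) (p + α • q),
         (2 * lam ^ 3 / (3 * lam - 1) ^ 2) • t3 (p - α • q) (p - α • q) (p - α • q)} := by
  have hl0 : 0 < lam := by linarith
  have h3 : 0 < 3 * lam - 1 := by linarith
  have hm : 0 < 4 * lam ^ 3 / (3 * lam - 1) := by positivity
  have hbound := sq_bLamForm_le_of_slice (slice_sq_le_of_half_lt hl)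
  have hsub : p - α • q = p + (-α) • q := by rw [neg_smul, sub_eq_add_neg]
  rw [bestSet_eq_of_attains (fun w hw ↦ sq_norm_bLam_sub_ge hp hq hpq hm hbound hw)
    ⟨_, _, _, _, rfl⟩ (sq_norm_bLam_sub_smul_t3_of_sq_eq hp hq hpq hl hα), hsub]
  ext v
  simp only [Set.mem_ofPred_eq, Set.mem_insert_iff, Set.mem_singleton_iff]
  refine ⟨?_, ?_⟩
  · rintro ⟨⟨c, u₁, u₂, u₃, rfl⟩, heq⟩
    obtain ⟨β, a, hβ, ha, hv⟩ := exists_eq_smul_t3_add_smul_of_sq_norm_bLam_sub_eq hp hq hpq hm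
      hbound (fun _ _ _ ↦ exists_snd_eq_mul_fst_of_sq_bLamForm_eq hl) heq
    have ha' : a = 2 * lam ^ 3 / (3 * lam - 1) ^ 2 := by
      rw [(by linear_combination 3 * hβ : 1 + 3 * lam * β ^ 2 = 2 * (3 * lam - 1)),
        ← eq_div_iff (by positivity)] at ha
      rw [ha]
      field_simp
      ring
    have hβα : β = α ∨ β = -α := sq_eq_sq_iff_eq_or_eq_neg.mp
      (mul_left_cancel₀ hl0.ne' (hβ.trans hα.symm))
    rw [hv, ha']
    rcases hβα with rfl | rfl
    exacts [Or.inl rfl, Or.inr rfl]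
  · rintro (rfl | rfl)
    · exact ⟨⟨_, _, _, _, rfl⟩, sq_norm_bLam_sub_smul_t3_of_sq_eq hp hq hpq hl hα⟩
    · exact ⟨⟨_, _, _, _, rfl⟩, sq_norm_bLam_sub_smul_t3_of_sq_eq hp hq hpq hl (by rwa [neg_sq])⟩

theorem t3_self_not_mem_bestSet_bLam (hp : ‖p‖ = 1) (hq : ‖q‖ = 1) (hpq : ⟪p, q⟫ = 0)
    (hl : 1 / 2 < lam) {α : ℝ} (hα : lam * α ^ 2 = 2 * lam - 1) :
    t3 p p p ∉ bestSet (bLam p q lam) := by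
  intro hmem
  have hle := pow_le_pow_left₀ (norm_nonneg _) (hmem.2 _ ⟨2 * lam ^ 3 / (3 * lam - 1) ^ 2,
    p + α • q, p + α • q, p + α • q, rfl⟩) 2
  rw [sq_norm_bLam_sub_t3_self hp hq hpq, sq_norm_bLam_sub_smul_t3_of_sq_eq hp hq hpq hl hα] at hle
  have h3 : 0 < 3 * lam - 1 := by linarith
  -- `4λ³ - (3λ - 1) = (2λ - 1)² (λ + 1) > 0`
  have : 1 < 4 * lam ^ 3 / (3 * lam - 1) := by
    rw [one_lt_div h3]
    nlinarith [mul_pos (mul_pos (by linarith : 0 < 2 * lam - 1) (by linarith : 0 < 2 * lam - 1))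
      (by linarith : 0 < lam + 1)]
  linarith

theorem smul_t3_add_smul_ne_smul_t3_sub_smul (hp : ‖p‖ = 1) (hq : ‖q‖ = 1) (hpq : ⟪p, q⟫ = 0)
    {c α : ℝ} (hc : c ≠ 0) (hα : α ≠ 0) :
    c • t3 (p + α • q) (p + α • q) (p + α • q) ≠ c • t3 (p - α • q) (p - α • q) (p - α • q) := by
  have hinner (β : ℝ) : ⟪t3 q p p, c • t3 (p + β • q) (p + β • q) (p + β • q)⟫ = c * β := by
    have h := coords_add_smul hp hq hpq β
    simp only [coords, Prod.mk.injEq] at h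
    rw [real_inner_smul_right, inner_t3, h.1, h.2]
    ring
  intro h
  have := congrArg (⟪t3 q p p, ·⟫) h
  rw [sub_eq_add_neg, ← neg_smul, hinner, hinner] at this
  have hcα : c * α = 0 := by linarith [mul_neg c α]
  exact hα ((mul_eq_zero.mp hcα).resolve_left hc)

end BestApproximation

/-- If `λ ≤ 1/2` then `p⊗p⊗p` is the unique best rank-one approximation of `b_λ`;
if `λ > 1/2` there are exactly two best rank-one approximations, neither equal to
`p⊗p⊗p`, of the form `c (p ± √((2λ−1)/λ) q)^{⊗3}`. -/
theorem stmt13 {n : ℕ} (p q : EuclideanSpace ℝ (Fin n))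
    (hp : ‖p‖ = 1) (hq : ‖q‖ = 1) (hpq : (inner ℝ p q : ℝ) = 0)
    (lam : ℝ) (hlam : 0 ≤ lam) :
    (lam ≤ 1 / 2 → bestSet (bLam p q lam) = {t3 p p p}) ∧
      (1 / 2 < lam →
        ∃ c₁ c₂ : ℝ,
          bestSet (bLam p q lam)
              = {c₁ • t3 (p + Real.sqrt ((2 * lam - 1) / lam) • q)
                    (p + Real.sqrt ((2 * lam - 1) / lam) • q)
                    (p + Real.sqrt ((2 * lam - 1) / lam) • q),
                 c₂ • t3 (p - Real.sqrt ((2 * lam - 1) / lam) • q)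
                    (p - Real.sqrt ((2 * lam - 1) / lam) • q)
                    (p - Real.sqrt ((2 * lam - 1) / lam) • q)} ∧
            c₁ • t3 (p + Real.sqrt ((2 * lam - 1) / lam) • q)
                    (p + Real.sqrt ((2 * lam - 1) / lam) • q)
                    (p + Real.sqrt ((2 * lam - 1) / lam) • q)
              ≠ c₂ • t3 (p - Real.sqrt ((2 * lam - 1) / lam) • q)
                    (p - Real.sqrt ((2 * lam - 1) / lam) • q)
                    (p - Real.sqrt ((2 * lam - 1) / lam) • q) ∧
            t3 p p p ∉ bestSet (bLam p q lam)) := by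
  refine ⟨bestSet_bLam_of_le_half hp hq hpq hlam, fun hl ↦ ?_⟩
  have hα : lam * Real.sqrt ((2 * lam - 1) / lam) ^ 2 = 2 * lam - 1 := by
    rw [Real.sq_sqrt (div_nonneg (by linarith) hlam)]
    field_simp
  have hα₀ : Real.sqrt ((2 * lam - 1) / lam) ≠ 0 :=
    (Real.sqrt_pos.mpr (div_pos (by linarith) (by linarith))).ne'
  have hc : 2 * lam ^ 3 / (3 * lam - 1) ^ 2 ≠ 0 := by
    have : 0 < 3 * lam - 1 := by linarith
    have : 0 < lam := by linarith
    positivity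
  exact ⟨_, _, bestSet_bLam_of_half_lt hp hq hpq hl hα,
    smul_t3_add_smul_ne_smul_t3_sub_smul hp hq hpq hc hα₀,
    t3_self_not_mem_bestSet_bLam hp hq hpq hl hα⟩
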